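/- Let S be a finite nonempty set of points of ℝ^n, β > 0 and y ∈ ℝ^n with S_*(y) ≠ S. Let π(x|y) := exp(−β‖y−x‖²/2) / Σ_{x'∈S} exp(−β‖y−x'‖²/2) for x ∈ S, and let π_*(x|y) := 1/|S_*(y)| if x ∈ S_*(y) and 0 otherwise. Then Σ_{x∈S} |π(x|y) − π_*(x|y)| ≤ 2|S| exp(−β c(y)). -/

import Mathlib

/-!
On the closest points `S_*(y)` all Gibbs weights `exp(-β‖y-x‖²/2)` equal `m = exp(-β dist(y,S)²/2)`,
and every other point has weight at most `exp(-β c(y)) m`. Writing `R` for the total weight of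
`S ∖ S_*(y)` and `Z` for the partition function, the total variation between the normalized
weights and the uniform measure on `S_*(y)` is exactly `2R/Z`, and `2R/Z ≤ 2R/m ≤ 2|S| exp(-β c(y))`.
-/

open scoped Classical BigOperators

noncomputable section

/-- `dist(y,S) = min_{x∈S} ‖y−x‖` (as the infimum of a finite nonempty set of reals). -/
def distS {n : ℕ} (S : Finset (EuclideanSpace ℝ (Fin n))) (y : EuclideanSpace ℝ (Fin n)) : ℝ :=
  sInf ((fun x => ‖y - x‖) '' ↑S)

/-- `S_*(y)`, the set of closest points of `S` to `y`. -/
def Sstar {n : ℕ} (S : Finset (EuclideanSpace ℝ (Fin n))) (y : EuclideanSpace ℝ (Fin n)) :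
    Finset (EuclideanSpace ℝ (Fin n)) :=
  S.filter fun x => ‖y - x‖ = distS S y

/-- The energy gap `c(y) = min_{x ∈ S∖S_*(y)} ‖y−x‖²/2 − dist(y,S)²/2`. -/
def gap {n : ℕ} (S : Finset (EuclideanSpace ℝ (Fin n))) (y : EuclideanSpace ℝ (Fin n)) : ℝ :=
  sInf ((fun x => ‖y - x‖ ^ 2 / 2) '' (↑S \ ↑(Sstar S y))) - distS S y ^ 2 / 2

/-- The Gibbs (softmax) weight `π(x|y) = exp(−β‖y−x‖²/2) / ∑_{x'∈S} exp(−β‖y−x'‖²/2)`. -/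
def gibbsW {n : ℕ} (S : Finset (EuclideanSpace ℝ (Fin n))) (β : ℝ)
    (x y : EuclideanSpace ℝ (Fin n)) : ℝ :=
  Real.exp (-β * ‖y - x‖ ^ 2 / 2) / ∑ x' ∈ S, Real.exp (-β * ‖y - x'‖ ^ 2 / 2)

/-- The uniform weight `π_*(x|y)` on the set of closest points `S_*(y)`. -/
def unifW {n : ℕ} (S : Finset (EuclideanSpace ℝ (Fin n)))
    (x y : EuclideanSpace ℝ (Fin n)) : ℝ :=
  if x ∈ Sstar S y then ((Sstar S y).card : ℝ)⁻¹ else 0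

open Finset

section Normalization

variable {α : Type*} [DecidableEq α] {S A : Finset α} {w : α → ℝ} {m : ℝ}

theorem sum_eq_card_mul_add_sum_sdiff (hAS : A ⊆ S) (hwA : ∀ x ∈ A, w x = m) :
    ∑ x ∈ S, w x = #A * m + ∑ x ∈ S \ A, w x := by
  rw [← sum_sdiff hAS, sum_congr rfl hwA, sum_const, nsmul_eq_mul, add_comm]

theorem sum_abs_div_sum_sub_uniform_eq (hAS : A ⊆ S) (hA : A.Nonempty)
    (hw : ∀ x ∈ S \ A, 0 ≤ w x) (hwA : ∀ x ∈ A, w x = m) (hm : 0 < m) :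
    ∑ x ∈ S, |w x / ∑ x' ∈ S, w x' - if x ∈ A then (#A : ℝ)⁻¹ else 0|
      = 2 * (∑ x ∈ S \ A, w x) / ∑ x ∈ S, w x := by
  have hZ := sum_eq_card_mul_add_sum_sdiff hAS hwA
  set R := ∑ x ∈ S \ A, w x
  set Z := ∑ x ∈ S, w x
  have hk : (0 : ℝ) < #A := by exact_mod_cast hA.card_pos
  have hR : 0 ≤ R := sum_nonneg hw
  have hZpos : 0 < Z := by rw [hZ]; positivity
  have hfar : ∑ x ∈ S \ A, |w x / Z - if x ∈ A then (#A : ℝ)⁻¹ else 0| = R / Z := by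
    rw [sum_div]
    refine sum_congr rfl fun x hx => ?_
    rw [if_neg (mem_sdiff.mp hx).2, sub_zero, abs_of_nonneg (div_nonneg (hw x hx) hZpos.le)]
  have hnear : ∑ x ∈ A, |w x / Z - if x ∈ A then (#A : ℝ)⁻¹ else 0| = R / Z := by
    have hterm : ∀ x ∈ A, |w x / Z - if x ∈ A then (#A : ℝ)⁻¹ else 0| = (#A : ℝ)⁻¹ - m / Z := by
      intro x hx
      have hmZ : m / Z ≤ (#A : ℝ)⁻¹ := by
        rw [div_le_iff₀ hZpos, inv_mul_eq_div, le_div_iff₀ hk]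
        linarith
      rw [if_pos hx, hwA x hx, abs_of_nonpos (sub_nonpos.mpr hmZ), neg_sub]
    rw [sum_congr rfl hterm, sum_const, nsmul_eq_mul, eq_div_iff hZpos.ne']
    field_simp
    linarith
  rw [← sum_sdiff hAS, hfar, hnear]
  ring

theorem sum_abs_div_sum_sub_uniform_le (hAS : A ⊆ S) (hA : A.Nonempty)
    (hw : ∀ x ∈ S \ A, 0 ≤ w x) (hwA : ∀ x ∈ A, w x = m) (hm : 0 < m) :
    ∑ x ∈ S, |w x / ∑ x' ∈ S, w x' - if x ∈ A then (#A : ℝ)⁻¹ else 0|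
      ≤ 2 * (∑ x ∈ S \ A, w x) / m := by
  have hR : 0 ≤ ∑ x ∈ S \ A, w x := sum_nonneg hw
  have hk : (1 : ℝ) ≤ #A := by exact_mod_cast hA.card_pos
  have hmZ : m ≤ ∑ x ∈ S, w x := by
    rw [sum_eq_card_mul_add_sum_sdiff hAS hwA]
    nlinarith
  rw [sum_abs_div_sum_sub_uniform_eq hAS hA hw hwA hm]
  gcongr

end Normalization

section ClosestPoints

variable {n : ℕ} {S : Finset (EuclideanSpace ℝ (Fin n))} {y x : EuclideanSpace ℝ (Fin n)}

theorem Sstar_subset : Sstar S y ⊆ S := filter_subset _ S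

theorem Sstar_nonempty (hS : S.Nonempty) : (Sstar S y).Nonempty := by
  obtain ⟨x, hx, hxd⟩ := ((coe_nonempty.mpr hS).image fun x => ‖y - x‖).csInf_mem
    ((S.finite_toSet).image _)
  exact ⟨x, mem_filter.mpr ⟨hx, hxd⟩⟩

theorem gap_add_distS_sq_div_two_le (hx : x ∈ S \ Sstar S y) :
    gap S y + distS S y ^ 2 / 2 ≤ ‖y - x‖ ^ 2 / 2 := by
  have hx' : x ∈ (S : Set _) \ Sstar S y := by simpa using hx
  have := csInf_le ((S.finite_toSet.sdiff).image fun x => ‖y - x‖ ^ 2 / 2).bddBelow ⟨x, hx', rfl⟩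
  rw [gap]
  linarith

theorem exp_neg_mul_norm_sq_le_exp_gap_mul {β : ℝ} (hβ : 0 ≤ β) (hx : x ∈ S \ Sstar S y) :
    Real.exp (-β * ‖y - x‖ ^ 2 / 2)
      ≤ Real.exp (-β * gap S y) * Real.exp (-β * distS S y ^ 2 / 2) := by
  rw [← Real.exp_add, Real.exp_le_exp]
  nlinarith [gap_add_distS_sq_div_two_le hx]

end ClosestPoints

theorem statement4_general {n : ℕ} (S : Finset (EuclideanSpace ℝ (Fin n))) (hS : S.Nonempty)
    (β : ℝ) (hβ : 0 < β) (y : EuclideanSpace ℝ (Fin n)) :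
    ∑ x ∈ S, |gibbsW S β x y - unifW S x y| ≤ 2 * S.card * Real.exp (-β * gap S y) := by
  set m := Real.exp (-β * distS S y ^ 2 / 2)
  set ε := Real.exp (-β * gap S y)
  have hm : 0 < m := Real.exp_pos _
  have hwA : ∀ x ∈ Sstar S y, Real.exp (-β * ‖y - x‖ ^ 2 / 2) = m := fun x hx => by
    rw [(mem_filter.mp hx).2]
  have hfar : ∑ x ∈ S \ Sstar S y, Real.exp (-β * ‖y - x‖ ^ 2 / 2) ≤ #S * (ε * m) :=
    calc _ ≤ #(S \ Sstar S y) • (ε * m) :=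
          sum_le_card_nsmul _ _ _ fun x hx => exp_neg_mul_norm_sq_le_exp_gap_mul hβ.le hx
      _ ≤ #S * (ε * m) := by
          rw [nsmul_eq_mul]
          gcongr
          exact sdiff_subset
  simp only [gibbsW, unifW]
  calc _ ≤ 2 * (∑ x ∈ S \ Sstar S y, Real.exp (-β * ‖y - x‖ ^ 2 / 2)) / m :=
        sum_abs_div_sum_sub_uniform_le Sstar_subset (Sstar_nonempty hS)
          (fun _ _ => (Real.exp_pos _).le) hwA hm
    _ ≤ 2 * (#S * (ε * m)) / m := by gcongr
    _ = 2 * #S * ε := by field_simp [hm.ne']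

/-- from the proof of Lemma 6.7(b) of the paper. For a finite nonempty
`S ⊂ ℝ^n`, `β > 0` and `y` with `S_*(y) ≠ S`, the total variation between the Gibbs weights
and the uniform weights on the closest points satisfies
`∑_{x∈S} |π(x|y) − π_*(x|y)| ≤ 2|S| exp(−β c(y))`. -/
theorem statement4 {n : ℕ} (S : Finset (EuclideanSpace ℝ (Fin n))) (hS : S.Nonempty)
    (β : ℝ) (hβ : 0 < β) (y : EuclideanSpace ℝ (Fin n)) (hne : Sstar S y ≠ S) :
    ∑ x ∈ S, |gibbsW S β x y - unifW S x y| ≤ 2 * S.card * Real.exp (-β * gap S y) :=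
  statement4_general S hS β hβ y

end
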